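/- arXiv:1703.10374 — 2 statements merged into one kernel-verified Lean document; each statement's English description precedes it below -/
import Mathlib

section
/- If (f_β, φ) and (f'_β, φ') are equivalent morphisms of inverse systems X → Y over B0 (in particular, if they are two choices of extension of the same morphism), then the coherent maps f and f' over B0 associated with them (defined by f_β(x, t) = f_{β0}(p_{φ(β0)φ(β)}(x)) and f'_β(x, t) = f'_{β0}(p_{φ'(β0)φ'(β)}(x))) are connected by an f.p. coherent homotopy. -/
open Set Topology TopologicalSpace unitInterval

universe u

/-- `f` is a fiber preserving (f.p.) map from `(X, πX)` to `(Y, πY)` over `B0`. -/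
def IsFPMap {B0 X Y : Type u} [TopologicalSpace B0] [TopologicalSpace X] [TopologicalSpace Y]
    (πX : X → B0) (πY : Y → B0) (f : X → Y) : Prop :=
  Continuous f ∧ ∀ x, πY (f x) = πX x

/-- Two f.p. maps are f.p. homotopic (homotopic over `B0`). -/
def FPHomotopic {B0 X Y : Type u} [TopologicalSpace B0] [TopologicalSpace X] [TopologicalSpace Y]
    (πX : X → B0) (πY : Y → B0) (f g : X → Y) : Prop :=
  ∃ H : X × unitInterval → Y, Continuous H ∧
    (∀ x, H (x, 0) = f x) ∧ (∀ x, H (x, 1) = g x) ∧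
    ∀ x t, πY (H (x, t)) = πX x

/-- A metrizable space `(Y, πY)` over `B0` is an absolute neighbourhood retract over `B0`:
for every closed f.p. embedding into a metrizable space over `B0` there is a neighbourhood of the
image and an f.p. retraction of that neighbourhood onto the image. -/
def IsFiberANR (B0 : Type u) [TopologicalSpace B0] (Y : Type u) [TopologicalSpace Y]
    (πY : Y → B0) : Prop :=
  MetrizableSpace Y ∧ Continuous πY ∧
  ∀ (X : Type u) (_ : TopologicalSpace X), MetrizableSpace X →
    ∀ πX : X → B0, Continuous πX →
    ∀ i : Y → X, IsClosedEmbedding i → (∀ y, πX (i y) = πY y) →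
    ∃ U : Set X, U ∈ nhdsSet (Set.range i) ∧
    ∃ r : U → X, Continuous r ∧ (∀ u : U, r u ∈ Set.range i) ∧
      (∀ u : U, πX (r u) = πX u) ∧ ∀ u : U, (u : X) ∈ Set.range i → r u = u

/-- A metrizable space `(Y, πY)` over `B0` is an absolute neighbourhood extensor over `B0`. -/
def IsFiberANE (B0 : Type u) [TopologicalSpace B0] (Y : Type u) [TopologicalSpace Y]
    (πY : Y → B0) : Prop :=
  MetrizableSpace Y ∧ Continuous πY ∧
  ∀ (X : Type u) (_ : TopologicalSpace X), MetrizableSpace X →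
    ∀ πX : X → B0, Continuous πX →
    ∀ A : Set X, IsClosed A →
    ∀ f : A → Y, Continuous f → (∀ a : A, πY (f a) = πX a) →
    ∃ U : Set X, U ∈ nhdsSet A ∧
    ∃ g : U → Y, Continuous g ∧ (∀ u : U, πY (g u) = πX u) ∧
      ∀ (a : X) (ha : a ∈ A) (hu : a ∈ U), g ⟨a, hu⟩ = f ⟨a, ha⟩

/-- An open cover of a topological space. -/
def IsOpenCover {Y : Type u} [TopologicalSpace Y] (𝒰 : Set (Set Y)) : Prop :=
  (∀ V ∈ 𝒰, IsOpen V) ∧ ⋃₀ 𝒰 = Set.univ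

/-- Two maps are `𝒰`-near. -/
def UNear {X Y : Type u} (𝒰 : Set (Set Y)) (f g : X → Y) : Prop :=
  ∀ x, ∃ V ∈ 𝒰, f x ∈ V ∧ g x ∈ V

/-- The (topological) weight of a space: the least cardinality of a basis of its topology. -/
noncomputable def tweight (X : Type u) [TopologicalSpace X] : Cardinal.{u} :=
  sInf {c | ∃ B : Set (Set X), IsTopologicalBasis B ∧ Cardinal.mk B = c}

/-- An inverse system in `Top_{B0}`: a directed set of indices, spaces over `B0` and f.p.
bonding maps. -/
structure FibInvSys (B0 : Type u) [TopologicalSpace B0] : Type (u + 1) where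
  Idx : Type u
  le : Idx → Idx → Prop
  le_refl : ∀ a, le a a
  le_trans : ∀ a b c, le a b → le b c → le a c
  directed : ∀ a b, ∃ c, le a c ∧ le b c
  obj : Idx → Type u
  topInst : ∀ a, TopologicalSpace (obj a)
  proj : ∀ a, obj a → B0
  proj_cont : ∀ a, @Continuous _ _ (topInst a) _ (proj a)
  bond : ∀ a a', le a a' → obj a' → obj a
  bond_cont : ∀ a a' (h : le a a'), @Continuous _ _ (topInst a') (topInst a) (bond a a' h)
  bond_fp : ∀ a a' (h : le a a') (x : obj a'), proj a (bond a a' h x) = proj a' x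
  bond_id : ∀ a (x : obj a), bond a a (le_refl a) x = x
  bond_comp : ∀ a a' a'' (h : le a a') (h' : le a' a'') (x : obj a''),
    bond a a' h (bond a' a'' h' x) = bond a a'' (le_trans a a' a'' h h') x

attribute [instance] FibInvSys.topInst

/-- A morphism from a space `(X, πX)` over `B0` to an inverse system in `Top_{B0}`. -/
structure FibMapToSys {B0 : Type u} [TopologicalSpace B0] (X : Type u) [TopologicalSpace X]
    (πX : X → B0) (S : FibInvSys B0) where
  maps : ∀ a : S.Idx, X → S.obj a
  cont : ∀ a, Continuous (maps a)
  fp : ∀ a x, S.proj a (maps a x) = πX x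
  comm : ∀ a a' (h : S.le a a') (x : X), S.bond a a' h (maps a' x) = maps a x

section Conditions

variable {B0 : Type u} [TopologicalSpace B0] (X : Type u) [TopologicalSpace X]
  (πX : X → B0) (S : FibInvSys B0)

/-- Condition (R1) of a resolution over `B0`. -/
def CondR1 (p : FibMapToSys X πX S) : Prop :=
  ∀ (P : Type u) (_ : TopologicalSpace P) (πP : P → B0), IsFiberANR B0 P πP →
    ∀ 𝒰 : Set (Set P), IsOpenCover 𝒰 →
    ∀ h : X → P, IsFPMap πX πP h →
    ∃ (a : S.Idx) (f : S.obj a → P), IsFPMap (S.proj a) πP f ∧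
      UNear 𝒰 h fun x => f (p.maps a x)

/-- Condition (R2) of a resolution over `B0`. -/
def CondR2 (p : FibMapToSys X πX S) : Prop :=
  ∀ (P : Type u) (_ : TopologicalSpace P) (πP : P → B0), IsFiberANR B0 P πP →
    ∀ 𝒰 : Set (Set P), IsOpenCover 𝒰 →
    ∃ 𝒰' : Set (Set P), IsOpenCover 𝒰' ∧
      ∀ (a : S.Idx) (f f' : S.obj a → P), IsFPMap (S.proj a) πP f → IsFPMap (S.proj a) πP f' →
        UNear 𝒰' (fun x => f (p.maps a x)) (fun x => f' (p.maps a x)) →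
        ∃ (a' : S.Idx) (h : S.le a a'),
          UNear 𝒰 (fun y => f (S.bond a a' h y)) fun y => f' (S.bond a a' h y)

/-- `p` is a resolution over `B0`. -/
def IsFibResolution (p : FibMapToSys X πX S) : Prop :=
  CondR1 X πX S p ∧ CondR2 X πX S p

/-- Condition (E1) of an expansion over `B0`. -/
def CondE1 (p : FibMapToSys X πX S) : Prop :=
  ∀ (P : Type u) (_ : TopologicalSpace P) (πP : P → B0), IsFiberANR B0 P πP →
    ∀ f : X → P, IsFPMap πX πP f →
    ∃ (a : S.Idx) (h : S.obj a → P), IsFPMap (S.proj a) πP h ∧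
      FPHomotopic πX πP (fun x => h (p.maps a x)) f

/-- Condition (E2) of an expansion over `B0`. -/
def CondE2 (p : FibMapToSys X πX S) : Prop :=
  ∀ (P : Type u) (_ : TopologicalSpace P) (πP : P → B0), IsFiberANR B0 P πP →
    ∀ (a : S.Idx) (f f' : S.obj a → P), IsFPMap (S.proj a) πP f → IsFPMap (S.proj a) πP f' →
      FPHomotopic πX πP (fun x => f (p.maps a x)) (fun x => f' (p.maps a x)) →
      ∃ (a' : S.Idx) (h : S.le a a'),
        FPHomotopic (S.proj a') πP (fun y => f (S.bond a a' h y)) fun y => f' (S.bond a a' h y)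

/-- Two f.p. homotopies `S, T : X × I → P` are f.p. homotopic rel `X × ∂I`. -/
def FPHomotopicRelEnds {P : Type u} [TopologicalSpace P] (πP : P → B0)
    (S T : X × unitInterval → P) : Prop :=
  ∃ G : (X × unitInterval) × unitInterval → P, Continuous G ∧
    (∀ z, G (z, 0) = S z) ∧ (∀ z, G (z, 1) = T z) ∧
    (∀ z s, πP (G (z, s)) = πX z.1) ∧
    (∀ x s, G ((x, 0), s) = S (x, 0)) ∧ ∀ x s, G ((x, 1), s) = S (x, 1)

/-- Condition (SE2) of a strong expansion over `B0`. -/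
def CondSE2 (p : FibMapToSys X πX S) : Prop :=
  ∀ (P : Type u) (_ : TopologicalSpace P) (πP : P → B0), IsFiberANR B0 P πP →
    ∀ (a : S.Idx) (f0 f1 : S.obj a → P), IsFPMap (S.proj a) πP f0 → IsFPMap (S.proj a) πP f1 →
    ∀ Sh : X × unitInterval → P, Continuous Sh → (∀ x t, πP (Sh (x, t)) = πX x) →
      (∀ x, Sh (x, 0) = f0 (p.maps a x)) → (∀ x, Sh (x, 1) = f1 (p.maps a x)) →
      ∃ (a' : S.Idx) (h : S.le a a') (H : S.obj a' × unitInterval → P),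
        Continuous H ∧ (∀ z t, πP (H (z, t)) = S.proj a' z) ∧
        (∀ z, H (z, 0) = f0 (S.bond a a' h z)) ∧
        (∀ z, H (z, 1) = f1 (S.bond a a' h z)) ∧
        FPHomotopicRelEnds X πX πP Sh fun zt => H (p.maps a' zt.1, zt.2)

/-- `p` is a strong expansion over `B0`. -/
def IsFibStrongExpansion (p : FibMapToSys X πX S) : Prop :=
  CondE1 X πX S p ∧ CondSE2 X πX S p

end Conditions

/-! ### Coherent maps over `B0` -/

/-- The pushforward of a point of a standard simplex along a map of index sets. -/
noncomputable def pushSimplex {m k : ℕ} (h : Fin m → Fin k) (t : stdSimplex ℝ (Fin m)) :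
    stdSimplex ℝ (Fin k) :=
  ⟨fun i => ∑ j ∈ Finset.univ.filter (fun j => h j = i), (t : Fin m → ℝ) j, by
    obtain ⟨h1, h2⟩ := t.2
    refine ⟨fun i => Finset.sum_nonneg fun j _ => h1 j, ?_⟩
    rw [Finset.sum_fiberwise Finset.univ h fun j => (t : Fin m → ℝ) j]
    exact h2⟩

/-- The `j`-th face map `∂ⁿ_j : Δⁿ → Δⁿ⁺¹` (inserting `0` in coordinate `j`). -/
noncomputable def simplexFace {n : ℕ} (j : Fin (n + 2)) :
    stdSimplex ℝ (Fin (n + 1)) → stdSimplex ℝ (Fin (n + 2)) :=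
  pushSimplex (Fin.succAbove j)

/-- The `j`-th degeneracy map `σⁿ_j : Δⁿ⁺¹ → Δⁿ` (adding coordinates `j` and `j + 1`). -/
noncomputable def simplexDegen {n : ℕ} (j : Fin (n + 1)) :
    stdSimplex ℝ (Fin (n + 2)) → stdSimplex ℝ (Fin (n + 1)) :=
  pushSimplex (Fin.predAbove j)

/-- The vertex of the `0`-simplex `Δ⁰`. -/
noncomputable def simplexPt : stdSimplex ℝ (Fin 1) :=
  ⟨fun _ => 1, fun _ => zero_le_one, by simp⟩

namespace FibInvSys

variable {B0 : Type u} [TopologicalSpace B0]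

/-- `𝒜ⁿ`: increasing sequences `(α₀ ≤ ⋯ ≤ αₙ)` of indices of the system `S`. -/
def IncSeq (S : FibInvSys B0) (n : ℕ) : Type u :=
  {β : Fin (n + 1) → S.Idx // ∀ i j : Fin (n + 1), i ≤ j → S.le (β i) (β j)}

/-- The `j`-th face operator `d_j : 𝒜ⁿ⁺¹ → 𝒜ⁿ`, deleting the `j`-th entry. -/
def seqFace (S : FibInvSys B0) {n : ℕ} (j : Fin (n + 2)) (β : S.IncSeq (n + 1)) : S.IncSeq n :=
  ⟨β.1 ∘ j.succAbove, fun i i' h => β.2 _ _ ((Fin.strictMono_succAbove j).monotone h)⟩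

/-- The `j`-th degeneracy operator `s_j : 𝒜ⁿ → 𝒜ⁿ⁺¹`, repeating the `j`-th entry. -/
def seqDegen (S : FibInvSys B0) {n : ℕ} (j : Fin (n + 1)) (β : S.IncSeq n) : S.IncSeq (n + 1) :=
  ⟨β.1 ∘ j.predAbove, fun i i' h => β.2 _ _ (Fin.predAbove_right_monotone j h)⟩

/-- The constant sequence `(b) ∈ ℬ⁰`. -/
def singleSeq (S : FibInvSys B0) (b : S.Idx) : S.IncSeq 0 :=
  ⟨fun _ => b, fun _ _ _ => S.le_refl b⟩

/-- The sequence `(b0 ≤ b1) ∈ ℬ¹`. -/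
def pairSeq (S : FibInvSys B0) (b0 b1 : S.Idx) (h : S.le b0 b1) : S.IncSeq 1 :=
  ⟨fun i => if i.1 = 0 then b0 else b1, by
    intro i j hij
    by_cases hi : i.1 = 0
    · by_cases hj : j.1 = 0
      · simp only [hi, hj, if_pos]
        exact S.le_refl b0
      · simp only [if_pos hi, if_neg hj]
        exact h
    · have hj : ¬ j.1 = 0 := by
        intro hj0
        exact hi (Nat.le_zero.mp (hj0 ▸ (hij : i.1 ≤ j.1)))
      simp only [if_neg hi, if_neg hj]
      exact S.le_refl b1⟩

/-- The inverse system `X × I = (X_α × I, p_{αα'} × 1_I, 𝒜)` over `B0`. -/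
def prodI (S : FibInvSys B0) : FibInvSys B0 where
  Idx := S.Idx
  le := S.le
  le_refl := S.le_refl
  le_trans := S.le_trans
  directed := S.directed
  obj a := S.obj a × unitInterval
  topInst a := inferInstance
  proj a z := S.proj a z.1
  proj_cont a := (S.proj_cont a).comp continuous_fst
  bond a a' h z := (S.bond a a' h z.1, z.2)
  bond_cont a a' h := Continuous.prodMk ((S.bond_cont a a' h).comp continuous_fst) continuous_snd
  bond_fp a a' h z := S.bond_fp a a' h z.1
  bond_id a z := by simp [S.bond_id]
  bond_comp a a' a'' h h' z := by simp [S.bond_comp]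

end FibInvSys

/-- A coherent map `f : X → Y` over `B0` between inverse systems in `Top_{B0}`: an index
function `φ` on increasing sequences together with f.p. maps
`f_β : X_{φ(β)} × Δⁿ → Y_{β₀}` satisfying the coherence conditions for faces and
degeneracies. -/
structure FPCoherentMap {B0 : Type u} [TopologicalSpace B0] (S T : FibInvSys B0) where
  φ : ∀ {n : ℕ}, T.IncSeq n → S.Idx
  f : ∀ {n : ℕ} (β : T.IncSeq n), S.obj (φ β) × stdSimplex ℝ (Fin (n + 1)) → T.obj (β.1 0)
  f_cont : ∀ {n : ℕ} (β : T.IncSeq n), Continuous (f β)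
  f_fp : ∀ {n : ℕ} (β : T.IncSeq n) (x : S.obj (φ β)) (t : stdSimplex ℝ (Fin (n + 1))),
    T.proj (β.1 0) (f β (x, t)) = S.proj (φ β) x
  φ_face : ∀ {n : ℕ} (β : T.IncSeq (n + 1)) (j : Fin (n + 2)),
    S.le (φ (T.seqFace j β)) (φ β)
  φ_degen : ∀ {n : ℕ} (β : T.IncSeq n) (j : Fin (n + 1)),
    S.le (φ β) (φ (T.seqDegen j β))
  coh_face : ∀ {n : ℕ} (β : T.IncSeq (n + 1)) (j : Fin (n + 2))
      (hb : T.le (β.1 0) ((T.seqFace j β).1 0)) (x : S.obj (φ β))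
      (t : stdSimplex ℝ (Fin (n + 1))),
      f β (x, simplexFace j t) =
        T.bond _ _ hb (f (T.seqFace j β) (S.bond _ _ (φ_face β j) x, t))
  coh_degen : ∀ {n : ℕ} (β : T.IncSeq n) (j : Fin (n + 1))
      (hb : T.le (β.1 0) ((T.seqDegen j β).1 0)) (x : S.obj (φ (T.seqDegen j β)))
      (t : stdSimplex ℝ (Fin (n + 2))),
      f β (S.bond _ _ (φ_degen β j) x, simplexDegen j t) =
        T.bond _ _ hb (f (T.seqDegen j β) (x, t))

/-- An f.p. coherent homotopy connecting the coherent maps `f` and `g`: a coherent map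
`F : X × I → Y` restricting to `f` at `0` and to `g` at `1`. -/
structure FPCoherentHomotopy {B0 : Type u} [TopologicalSpace B0] {S T : FibInvSys B0}
    (f g : FPCoherentMap S T) where
  F : FPCoherentMap S.prodI T
  le_left : ∀ {n : ℕ} (β : T.IncSeq n), S.le (f.φ β) (F.φ β)
  le_right : ∀ {n : ℕ} (β : T.IncSeq n), S.le (g.φ β) (F.φ β)
  at_zero : ∀ {n : ℕ} (β : T.IncSeq n) (x : S.obj (F.φ β)) (t : stdSimplex ℝ (Fin (n + 1))),
    F.f β ((x, 0), t) = f.f β (S.bond _ _ (le_left β) x, t)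
  at_one : ∀ {n : ℕ} (β : T.IncSeq n) (x : S.obj (F.φ β)) (t : stdSimplex ℝ (Fin (n + 1))),
    F.f β ((x, 1), t) = g.f β (S.bond _ _ (le_right β) x, t)

/-- Two coherent maps over `B0` are f.p. coherently homotopic. -/
def FPCohHomotopic {B0 : Type u} [TopologicalSpace B0] {S T : FibInvSys B0}
    (f g : FPCoherentMap S T) : Prop :=
  Nonempty (FPCoherentHomotopy f g)

/-! Once pulled back far enough along the bonds, the two coherent maps coincide: at an index above
`φ(β)`, `φ'(β)` and the index where `f_{β₀}` and `f'_{β₀}` agree, both are `f_{β₀} ∘ p = f'_{β₀} ∘ p`.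
So the stationary homotopy `(x, s, t) ↦ f_β(p x, t)` connects them, provided the refined indices
`Φ(β)` form a coherent index function. `Φ` is built by recursion on `n`, as an upper bound of the
required index and of all `Φ(d_j β)`; since `d_j (s_j β) = β` it is monotone along degeneracies
too. -/

namespace FibInvSys

variable {B0 : Type u} [TopologicalSpace B0]

theorem exists_ub_fin (S : FibInvSys B0) {k : ℕ} (c : S.Idx) (a : Fin k → S.Idx) :
    ∃ d, S.le c d ∧ ∀ i, S.le (a i) d := by
  classical
  have : IsTrans S.Idx S.le := ⟨S.le_trans⟩
  have : Nonempty S.Idx := ⟨c⟩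
  obtain ⟨d, hd⟩ := (show Directed S.le id from S.directed).finset_le
    (insert c (Finset.univ.image a))
  exact ⟨d, hd c (by simp), fun i => hd (a i) (by simp)⟩

theorem seqFace_castSucc_seqDegen (T : FibInvSys B0) {n : ℕ} (j : Fin (n + 1))
    (β : T.IncSeq n) : T.seqFace j.castSucc (T.seqDegen j β) = β :=
  Subtype.ext <| funext fun i => congrArg β.1 (Fin.predAbove_succAbove j i)

noncomputable def coherentIndex (S T : FibInvSys B0) (base : ∀ {n : ℕ}, T.IncSeq n → S.Idx) :
    ∀ {n : ℕ}, T.IncSeq n → S.Idx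
  | 0, β => base β
  | _ + 1, β => Classical.choose
      (S.exists_ub_fin (base β) fun j => coherentIndex S T base (T.seqFace j β))

variable (S T : FibInvSys B0) (base : ∀ {n : ℕ}, T.IncSeq n → S.Idx)

theorem le_coherentIndex : ∀ {n : ℕ} (β : T.IncSeq n), S.le (base β) (coherentIndex S T base β)
  | 0, _ => S.le_refl _
  | _ + 1, β => (Classical.choose_spec
      (S.exists_ub_fin (base β) fun j => coherentIndex S T base (T.seqFace j β))).1

theorem coherentIndex_seqFace_le {n : ℕ} (β : T.IncSeq (n + 1)) (j : Fin (n + 2)) :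
    S.le (coherentIndex S T base (T.seqFace j β)) (coherentIndex S T base β) :=
  (Classical.choose_spec
    (S.exists_ub_fin (base β) fun j => coherentIndex S T base (T.seqFace j β))).2 j

theorem coherentIndex_le_seqDegen {n : ℕ} (β : T.IncSeq n) (j : Fin (n + 1)) :
    S.le (coherentIndex S T base β) (coherentIndex S T base (T.seqDegen j β)) := by
  simpa only [seqFace_castSucc_seqDegen] using
    coherentIndex_seqFace_le S T base (T.seqDegen j β) j.castSucc

end FibInvSys

namespace FPCoherentMap

variable {B0 : Type u} [TopologicalSpace B0] {S T : FibInvSys B0}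

def reindex (F : FPCoherentMap S T) (Φ : ∀ {n : ℕ}, T.IncSeq n → S.Idx)
    (hle : ∀ {n : ℕ} (β : T.IncSeq n), S.le (F.φ β) (Φ β))
    (hface : ∀ {n : ℕ} (β : T.IncSeq (n + 1)) (j : Fin (n + 2)), S.le (Φ (T.seqFace j β)) (Φ β))
    (hdegen : ∀ {n : ℕ} (β : T.IncSeq n) (j : Fin (n + 1)), S.le (Φ β) (Φ (T.seqDegen j β))) :
    FPCoherentMap S T where
  φ := Φ
  f β xt := F.f β (S.bond _ _ (hle β) xt.1, xt.2)
  f_cont β := (F.f_cont β).comp <|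
    ((S.bond_cont _ _ _).comp continuous_fst).prodMk continuous_snd
  f_fp β x t := by rw [F.f_fp, S.bond_fp]
  φ_face := hface
  φ_degen := hdegen
  coh_face β j hb x t := by
    rw [F.coh_face β j hb]
    simp only [S.bond_comp]
  coh_degen β j hb x t := by
    have h := F.coh_degen β j hb (S.bond _ _ (hle _) x) t
    simp only [S.bond_comp] at h ⊢
    exact h

def prodI (F : FPCoherentMap S T) : FPCoherentMap S.prodI T where
  φ := F.φ
  f β xt := F.f β (xt.1.1, xt.2)
  f_cont {n} β :=
    show Continuous fun xt : (S.obj (F.φ β) × I) × stdSimplex ℝ (Fin (n + 1)) => F.f β (xt.1.1, xt.2)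
    from (F.f_cont β).comp (continuous_fst.fst.prodMk continuous_snd)
  f_fp β x t := F.f_fp β x.1 t
  φ_face := F.φ_face
  φ_degen := F.φ_degen
  coh_face β j hb x t := F.coh_face β j hb x.1 t
  coh_degen β j hb x t := F.coh_degen β j hb x.1 t

end FPCoherentMap

namespace FPCoherentHomotopy

variable {B0 : Type u} [TopologicalSpace B0] {S T : FibInvSys B0}

def ofEq (F G : FPCoherentMap S T) (Φ : ∀ {n : ℕ}, T.IncSeq n → S.Idx)
    (hF : ∀ {n : ℕ} (β : T.IncSeq n), S.le (F.φ β) (Φ β))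
    (hG : ∀ {n : ℕ} (β : T.IncSeq n), S.le (G.φ β) (Φ β))
    (hface : ∀ {n : ℕ} (β : T.IncSeq (n + 1)) (j : Fin (n + 2)), S.le (Φ (T.seqFace j β)) (Φ β))
    (hdegen : ∀ {n : ℕ} (β : T.IncSeq n) (j : Fin (n + 1)), S.le (Φ β) (Φ (T.seqDegen j β)))
    (heq : ∀ {n : ℕ} (β : T.IncSeq n) (x : S.obj (Φ β)) (t : stdSimplex ℝ (Fin (n + 1))),
      F.f β (S.bond _ _ (hF β) x, t) = G.f β (S.bond _ _ (hG β) x, t)) :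
    FPCoherentHomotopy F G where
  F := (F.reindex Φ hF hface hdegen).prodI
  le_left := hF
  le_right := hG
  at_zero _ _ _ := rfl
  at_one := heq

end FPCoherentHomotopy

theorem FPCohHomotopic.of_eq_after_bond {B0 : Type u} [TopologicalSpace B0] {S T : FibInvSys B0}
    {F G : FPCoherentMap S T}
    (h : ∀ {n : ℕ} (β : T.IncSeq n), ∃ (c : S.Idx) (hF : S.le (F.φ β) c) (hG : S.le (G.φ β) c),
      ∀ (x : S.obj c) (t : stdSimplex ℝ (Fin (n + 1))),
        F.f β (S.bond _ _ hF x, t) = G.f β (S.bond _ _ hG x, t)) :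
    FPCohHomotopic F G := by
  choose c hFc hGc heq using @h
  let Φ : ∀ {n : ℕ}, T.IncSeq n → S.Idx := S.coherentIndex T c
  have hcΦ : ∀ {n : ℕ} (β : T.IncSeq n), S.le (c β) (Φ β) := S.le_coherentIndex T c
  refine ⟨.ofEq F G Φ (fun β => S.le_trans _ _ _ (hFc β) (hcΦ β))
    (fun β => S.le_trans _ _ _ (hGc β) (hcΦ β)) (S.coherentIndex_seqFace_le T c)
    (S.coherentIndex_le_seqDegen T c) fun β x t => ?_⟩
  simpa only [S.bond_comp] using heq β (S.bond _ _ (hcΦ β) x) t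

theorem equivalent_morphisms_cohHomotopic_general (B0 : Type u) [TopologicalSpace B0]
    (S T : FibInvSys B0)
    (φ0 φ0' : T.Idx → S.Idx)
    (f0 : ∀ b : T.Idx, S.obj (φ0 b) → T.obj b) (f0' : ∀ b : T.Idx, S.obj (φ0' b) → T.obj b)
    (hequiv : ∀ b : T.Idx, ∃ (a : S.Idx) (h1 : S.le (φ0 b) a) (h2 : S.le (φ0' b) a),
      ∀ x : S.obj a, f0 b (S.bond _ _ h1 x) = f0' b (S.bond _ _ h2 x))
    (F F' : FPCoherentMap S T)
    (hFge : ∀ (n : ℕ) (β : T.IncSeq n), S.le (φ0 (β.1 0)) (F.φ β))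
    (hF : ∀ (n : ℕ) (β : T.IncSeq n) (h : S.le (φ0 (β.1 0)) (F.φ β))
      (x : S.obj (F.φ β)) (t : stdSimplex ℝ (Fin (n + 1))),
      F.f β (x, t) = f0 (β.1 0) (S.bond _ _ h x))
    (hF'ge : ∀ (n : ℕ) (β : T.IncSeq n), S.le (φ0' (β.1 0)) (F'.φ β))
    (hF' : ∀ (n : ℕ) (β : T.IncSeq n) (h : S.le (φ0' (β.1 0)) (F'.φ β))
      (x : S.obj (F'.φ β)) (t : stdSimplex ℝ (Fin (n + 1))),
      F'.f β (x, t) = f0' (β.1 0) (S.bond _ _ h x)) :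
    FPCohHomotopic F F' := by
  refine .of_eq_after_bond fun {n} β => ?_
  obtain ⟨a, h1, h2, heq⟩ := hequiv (β.1 0)
  obtain ⟨c, hac, hc⟩ := S.exists_ub_fin a ![F.φ β, F'.φ β]
  have hFc : S.le (F.φ β) c := hc 0
  have hF'c : S.le (F'.φ β) c := hc 1
  refine ⟨c, hFc, hF'c, fun x t => ?_⟩
  calc F.f β (S.bond _ _ hFc x, t)
      = f0 (β.1 0) (S.bond _ _ h1 (S.bond _ _ hac x)) := by
        rw [hF _ _ (hFge _ _)]
        simp only [S.bond_comp]
    _ = f0' (β.1 0) (S.bond _ _ h2 (S.bond _ _ hac x)) := heq _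
    _ = F'.f β (S.bond _ _ hF'c x, t) := by
        rw [hF' _ _ (hF'ge _ _)]
        simp only [S.bond_comp]

/-- Equivalent morphisms of inverse systems over `B0` induce f.p. coherently homotopic
coherent maps. -/
theorem equivalent_morphisms_cohHomotopic (B0 : Type u) [TopologicalSpace B0]
    [MetrizableSpace B0] (S T : FibInvSys B0)
    (φ0 φ0' : T.Idx → S.Idx)
    (f0 : ∀ b : T.Idx, S.obj (φ0 b) → T.obj b) (f0' : ∀ b : T.Idx, S.obj (φ0' b) → T.obj b)
    (hf0 : ∀ b : T.Idx, IsFPMap (S.proj (φ0 b)) (T.proj b) (f0 b))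
    (hf0' : ∀ b : T.Idx, IsFPMap (S.proj (φ0' b)) (T.proj b) (f0' b))
    (hequiv : ∀ b : T.Idx, ∃ (a : S.Idx) (h1 : S.le (φ0 b) a) (h2 : S.le (φ0' b) a),
      ∀ x : S.obj a, f0 b (S.bond _ _ h1 x) = f0' b (S.bond _ _ h2 x))
    (F F' : FPCoherentMap S T)
    (hFge : ∀ (n : ℕ) (β : T.IncSeq n), S.le (φ0 (β.1 0)) (F.φ β))
    (hF : ∀ (n : ℕ) (β : T.IncSeq n) (h : S.le (φ0 (β.1 0)) (F.φ β))
      (x : S.obj (F.φ β)) (t : stdSimplex ℝ (Fin (n + 1))),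
      F.f β (x, t) = f0 (β.1 0) (S.bond _ _ h x))
    (hF'ge : ∀ (n : ℕ) (β : T.IncSeq n), S.le (φ0' (β.1 0)) (F'.φ β))
    (hF' : ∀ (n : ℕ) (β : T.IncSeq n) (h : S.le (φ0' (β.1 0)) (F'.φ β))
      (x : S.obj (F'.φ β)) (t : stdSimplex ℝ (Fin (n + 1))),
      F'.f β (x, t) = f0' (β.1 0) (S.bond _ _ h x)) :
    FPCohHomotopic F F' :=
  equivalent_morphisms_cohHomotopic_general B0 S T φ0 φ0' f0 f0' hequiv F F' hFge hF hF'ge hF'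
end

section
/- If Y1 and Y2 are ANR_{B0}-spaces, then their fiber product Y1 ×_{B0} Y2 = {(y1, y2) ∈ Y1 × Y2 : π_{Y1}(y1) = π_{Y2}(y2)}, regarded as a space over B0 via (y1, y2) ↦ π_{Y1}(y1), is an ANR_{B0}-space. -/
open Set Topology TopologicalSpace unitInterval

universe u

/-!
Over a metrizable base, being an `ANR_{B0}` is the same as being an `ANE_{B0}`, and the
extension property passes to fiber products coordinatewise: extend both coordinates of a map into
`Y₁ ×_{B0} Y₂` to neighbourhoods and restrict to their intersection, where the two extensions
still agree over `B0`.

For `ANR ⇒ ANE`, embed `Y` over `B0` as a closed subset of `B0 × H`, where `H` is the convex hull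
of the Kuratowski image of `Y` in `Y →ᵇ ℝ`; `Y` is closed in `H` because for every `v ∈ H` the
function `v + dist y₀` dominates a positive multiple of `dist z` for some `z ∈ Y`. Extend a
map into `Y` to a map into `B0 × H` by Dugundji's theorem and push it back into `Y` with the f.p.
retraction given by the ANR property.
-/

open Metric
open scoped BoundedContinuousFunction

theorem Continuous.isClosedEmbedding_prodMk {Y B H : Type*} [TopologicalSpace Y]
    [TopologicalSpace B] [TopologicalSpace H] [T2Space B] [T2Space H] {p : Y → B} {g : Y → H}
    (hp : Continuous p) (hg : IsClosedEmbedding g) : IsClosedEmbedding fun y => (p y, g y) :=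
  have hcont : Continuous fun y => (p y, g y) := hp.prodMk hg.continuous
  .of_continuous_injective_isClosedMap hcont (fun _ _ h => hg.injective (congrArg Prod.snd h))
    (isProperMap_of_comp_of_t2 hcont continuous_snd hg.isProperMap).isClosedMap

theorem dist_lt_four_mul_of_dist_lt_infDist {X : Type*} [MetricSpace X] {A : Set X}
    {p q a a' : X} (ha : a ∈ A) (hq : dist q p < infDist p A / 4)
    (ha' : dist p a' < 2 * infDist p A) : dist a' a < 4 * dist q a := by
  have hpa : infDist p A ≤ dist p q + dist q a :=
    (infDist_le_dist_of_mem ha).trans (dist_triangle _ _ _)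
  have := dist_triangle4 a' p q a
  rw [dist_comm a' p] at this
  rw [dist_comm q p] at hq
  linarith

theorem exists_continuous_extension_mem_convexHull {X E : Type*} [MetricSpace X]
    [NormedAddCommGroup E] [NormedSpace ℝ E] {A : Set X} (hA : IsClosed A) (hAne : A.Nonempty)
    {f : A → E} (hf : Continuous f) :
    ∃ g : X → E, Continuous g ∧ (∀ a : A, g a = f a) ∧ ∀ x, g x ∈ convexHull ℝ (range f) := by
  classical
  have hpos : ∀ p : ↥Aᶜ, 0 < infDist (p : X) A := fun p =>
    (hA.notMem_iff_infDist_pos hAne).1 p.2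
  have hanchor : ∀ p : ↥Aᶜ, ∃ a : A, dist (p : X) a < 2 * infDist (p : X) A := fun p => by
    obtain ⟨a, ha, h⟩ := (infDist_lt_iff hAne).1 (lt_two_mul_self (hpos p))
    exact ⟨⟨a, ha⟩, h⟩
  choose anchor hanchor using hanchor
  obtain ⟨ρ, hρ⟩ := PartitionOfUnity.exists_isSubordinate isClosed_univ
    (fun p : ↥Aᶜ => ball p (infDist (p : X) A / 4)) (fun _ => isOpen_ball)
    fun q _ => mem_iUnion.2 ⟨q, mem_ball_self (by linarith [hpos q])⟩
  let g₀ : ↥Aᶜ → E := fun q => ∑ᶠ p, ρ p q • f (anchor p)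
  have hg₀ : Continuous g₀ := ρ.continuous_finsum_smul fun _ _ _ => continuousAt_const
  have hg₀_mem : ∀ q {t : Set E}, Convex ℝ t → (∀ p, ρ p q ≠ 0 → f (anchor p) ∈ t) → g₀ q ∈ t :=
    fun q _ ht h => ρ.finsum_smul_mem_convex (g := fun p _ => f (anchor p)) (mem_univ q) h ht
  have hρ_ball : ∀ p q, ρ p q ≠ 0 → dist (q : X) p < infDist (p : X) A / 4 := fun p q h =>
    hρ p (subset_closure h)
  let g : X → E := fun x => if hx : x ∈ A then f ⟨x, hx⟩ else g₀ ⟨x, hx⟩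
  have hgA : ∀ a : A, g a = f a := fun a => dif_pos a.2
  have hgAc : ∀ q : ↥Aᶜ, g q = g₀ q := fun q => dif_neg q.2
  have hcont_A : ∀ a : A, ContinuousAt g a := by
    intro a
    refine Metric.continuousAt_iff.2 fun ε hε => ?_
    obtain ⟨δ, hδ, hfδ⟩ := Metric.continuousAt_iff.1 hf.continuousAt (ε / 2) (half_pos hε)
    refine ⟨δ / 4, by positivity, fun {y} hy => ?_⟩
    rw [hgA]
    by_cases hyA : y ∈ A
    · rw [hgA ⟨y, hyA⟩]
      exact (hfδ (by rw [Subtype.dist_eq]; linarith)).trans (half_lt_self hε)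
    · refine (mem_closedBall.1 ?_).trans_lt (half_lt_self hε)
      rw [hgAc ⟨y, hyA⟩]
      refine hg₀_mem ⟨y, hyA⟩ (convex_closedBall _ _) fun p hp => (hfδ ?_).le
      rw [Subtype.dist_eq]
      linarith [dist_lt_four_mul_of_dist_lt_infDist a.2 (hρ_ball p _ hp) (hanchor p)]
  refine ⟨g, continuous_iff_continuousAt.2 fun x => ?_, hgA, fun x => ?_⟩
  · by_cases hx : x ∈ A
    · exact hcont_A ⟨x, hx⟩
    · have : ContinuousOn g Aᶜ := by
        rw [continuousOn_iff_continuous_domRestrict]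
        exact (funext hgAc : Aᶜ.domRestrict g = g₀) ▸ hg₀
      exact this.continuousAt (hA.isOpen_compl.mem_nhds hx)
  · by_cases hx : x ∈ A
    · exact hgA ⟨x, hx⟩ ▸ subset_convexHull ℝ _ (mem_range_self _)
    · exact hgAc ⟨x, hx⟩ ▸ hg₀_mem _ (convex_convexHull ℝ _)
        fun p _ => subset_convexHull ℝ _ (mem_range_self _)

noncomputable def kuratowskiMap {Y : Type*} [MetricSpace Y] (y₀ : Y) (y : Y) : Y →ᵇ ℝ :=
  BoundedContinuousFunction.mkOfBound ⟨fun t => dist y t - dist y₀ t, by fun_prop⟩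
    (2 * dist y y₀) fun s t => by
      rw [Real.dist_eq]
      calc |(dist y s - dist y₀ s) - (dist y t - dist y₀ t)|
          ≤ |dist y s - dist y₀ s| + |dist y t - dist y₀ t| := abs_sub _ _
        _ ≤ 2 * dist y y₀ := by linarith [abs_dist_sub_le y y₀ s, abs_dist_sub_le y y₀ t]

section Kuratowski

variable {Y : Type*} [MetricSpace Y] (y₀ : Y)

@[simp] theorem kuratowskiMap_apply (y t : Y) : kuratowskiMap y₀ y t = dist y t - dist y₀ t := rfl

theorem isometry_kuratowskiMap : Isometry (kuratowskiMap y₀) := by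
  refine Isometry.of_dist_eq fun y z => le_antisymm ?_ ?_
  · refine (BoundedContinuousFunction.dist_le dist_nonneg).2 fun t => ?_
    rw [Real.dist_eq, kuratowskiMap_apply, kuratowskiMap_apply, sub_sub_sub_cancel_right]
    exact abs_dist_sub_le y z t
  · have := BoundedContinuousFunction.dist_coe_le_dist (f := kuratowskiMap y₀ y)
      (g := kuratowskiMap y₀ z) z
    rw [Real.dist_eq, kuratowskiMap_apply, kuratowskiMap_apply, dist_self,
      sub_sub_sub_cancel_right, sub_zero, abs_of_nonneg dist_nonneg] at this
    exact this

theorem exists_mul_dist_le_of_mem_convexHull {v : Y →ᵇ ℝ}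
    (hv : v ∈ convexHull ℝ (range (kuratowskiMap y₀))) :
    ∃ z : Y, ∃ c : ℝ, 0 < c ∧ ∀ x, c * dist z x ≤ v x + dist y₀ x := by
  refine convexHull_min (t := {v | ∃ z : Y, ∃ c : ℝ, 0 < c ∧ ∀ x, c * dist z x ≤ v x + dist y₀ x})
    ?_ ?_ hv
  · rintro _ ⟨z, rfl⟩
    exact ⟨z, 1, one_pos, fun x => by simp⟩
  · refine convex_iff_forall_pos.2 fun v₁ ⟨z, c, hc, hv₁⟩ v₂ ⟨_, c₂, hc₂, hv₂⟩ a b ha hb hab =>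
      ⟨z, a * c, mul_pos ha hc, fun x => ?_⟩
    have h₂ : 0 ≤ v₂ x + dist y₀ x := (mul_nonneg hc₂.le dist_nonneg).trans (hv₂ x)
    have hsplit : (a • v₁ + b • v₂) x + dist y₀ x
        = a * (v₁ x + dist y₀ x) + b * (v₂ x + dist y₀ x) := by
      simp only [BoundedContinuousFunction.coe_add, BoundedContinuousFunction.coe_smul,
        Pi.add_apply, smul_eq_mul]
      linear_combination (-dist y₀ x) * hab
    rw [hsplit, mul_assoc]
    nlinarith [hv₁ x, mul_nonneg hb.le h₂]

theorem mem_range_kuratowskiMap_of_mem_closure {v : Y →ᵇ ℝ}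
    (hv : v ∈ convexHull ℝ (range (kuratowskiMap y₀)))
    (hcl : v ∈ closure (range (kuratowskiMap y₀))) : v ∈ range (kuratowskiMap y₀) := by
  obtain ⟨z, c, hc, hz⟩ := exists_mul_dist_le_of_mem_convexHull y₀ hv
  refine ⟨z, dist_le_zero.1 <| le_of_forall_pos_le_add fun ε hε => ?_⟩
  let δ := c * ε / (c + 1)
  have hδ : δ + δ / c = ε := by simp only [δ]; field_simp
  obtain ⟨y, hy⟩ := Metric.mem_closure_range_iff.1 hcl δ (by positivity)
  -- `kuratowskiMap y₀ y` vanishes at `y`, so `v y + dist y₀ y` is small.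
  have hzy : c * dist z y ≤ dist v (kuratowskiMap y₀ y) := by
    have := BoundedContinuousFunction.dist_coe_le_dist (f := v) (g := kuratowskiMap y₀ y) y
    rw [kuratowskiMap_apply, dist_self, Real.dist_eq] at this
    linarith [hz y, le_abs_self (v y - (0 - dist y₀ y))]
  have hzy' : dist z y ≤ δ / c := by
    rw [le_div_iff₀ hc, mul_comm]; exact hzy.trans hy.le
  calc dist (kuratowskiMap y₀ z) v
      ≤ dist (kuratowskiMap y₀ z) (kuratowskiMap y₀ y) + dist (kuratowskiMap y₀ y) v :=
        dist_triangle _ _ _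
    _ = dist z y + dist v (kuratowskiMap y₀ y) := by
        rw [(isometry_kuratowskiMap y₀).dist_eq, dist_comm v]
    _ ≤ 0 + ε := by linarith

end Kuratowski

theorem isClosedEmbedding_codRestrict_kuratowskiMap {Y : Type*} [MetricSpace Y] (y₀ : Y) :
    IsClosedEmbedding (codRestrict (kuratowskiMap y₀) (convexHull ℝ (range (kuratowskiMap y₀)))
      fun y => subset_convexHull ℝ _ (mem_range_self y)) := by
  refine ⟨(isometry_kuratowskiMap y₀).isEmbedding.codRestrict _ _,
    isClosed_induced_iff.2 ⟨closure (range (kuratowskiMap y₀)), isClosed_closure, ?_⟩⟩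
  ext ⟨v, hv⟩
  exact ⟨fun hcl => by
    obtain ⟨y, rfl⟩ := mem_range_kuratowskiMap_of_mem_closure y₀ hv hcl
    exact ⟨y, rfl⟩, fun ⟨y, hy⟩ => subset_closure ⟨y, congrArg Subtype.val hy⟩⟩

section FiberANR

variable {B0 : Type u} [TopologicalSpace B0]

theorem IsFiberANR.exists_extension_of_ambient_extension {Y Q X : Type u} [TopologicalSpace Y]
    [TopologicalSpace Q] [MetrizableSpace Q] [TopologicalSpace X] {πY : Y → B0} {πQ : Q → B0}
    {πX : X → B0} (hY : IsFiberANR B0 Y πY) (hπQ : Continuous πQ) {j : Y → Q}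
    (hj : IsClosedEmbedding j) (hjπ : ∀ y, πQ (j y) = πY y) {A : Set X} {f : A → Y}
    {G : X → Q} (hG : Continuous G) (hGπ : ∀ x, πQ (G x) = πX x) (hGA : ∀ a : A, G a = j (f a)) :
    ∃ U ∈ 𝓝ˢ A, ∃ g : U → Y, Continuous g ∧ (∀ u : U, πY (g u) = πX u) ∧
      ∀ (a : X) (ha : a ∈ A) (hu : a ∈ U), g ⟨a, hu⟩ = f ⟨a, ha⟩ := by
  obtain ⟨W, hW, r, hr, hr_mem, hrπ, hr_id⟩ := hY.2.2 Q _ inferInstance πQ hπQ j hj hjπ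
  obtain ⟨O, hO, hjO, hOW⟩ := mem_nhdsSet_iff_exists.1 hW
  let e := hj.isEmbedding.toHomeomorph
  let g : G ⁻¹' O → Y := fun x => e.symm ⟨r ⟨G x, hOW x.2⟩, hr_mem _⟩
  have hjg : ∀ x, j (g x) = r ⟨G x, hOW x.2⟩ := fun x =>
    congrArg Subtype.val (e.apply_symm_apply _)
  refine ⟨G ⁻¹' O, (hO.preimage hG).mem_nhdsSet.2 fun a ha => ?_, g, ?_, fun x => ?_,
    fun a ha hu => hj.injective ?_⟩
  · exact mem_preimage.2 (hGA ⟨a, ha⟩ ▸ hjO (mem_range_self _))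
  · exact e.symm.continuous.comp
      ((hr.comp ((hG.comp continuous_subtype_val).subtype_mk _)).subtype_mk _)
  · rw [← hjπ, hjg, hrπ, hGπ]
  · rw [hjg, hr_id _ ⟨f ⟨a, ha⟩, (hGA ⟨a, ha⟩).symm⟩]
    exact hGA ⟨a, ha⟩

theorem IsFiberANR.isFiberANE [MetrizableSpace B0] {Y : Type u} [TopologicalSpace Y]
    {πY : Y → B0} (hY : IsFiberANR B0 Y πY) : IsFiberANE B0 Y πY := by
  refine ⟨hY.1, hY.2.1, fun X _ _ πX hπX A hA f hf hfπ => ?_⟩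
  rcases A.eq_empty_or_nonempty with rfl | ⟨x₀, hx₀⟩
  · exact ⟨∅, by simp, fun u => u.2.elim, continuous_of_discreteTopology,
      fun u => u.2.elim, fun _ ha => ha.elim⟩
  have := hY.1
  let _ : MetricSpace Y := metrizableSpaceMetric Y
  let _ : MetricSpace X := metrizableSpaceMetric X
  let φ := kuratowskiMap (f ⟨x₀, hx₀⟩)
  let H := convexHull ℝ (range φ)
  obtain ⟨D, hD, hDA, hDH⟩ := exists_continuous_extension_mem_convexHull hA ⟨x₀, hx₀⟩
    ((isometry_kuratowskiMap _).continuous.comp hf)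
  have hDH' : ∀ x, D x ∈ H := fun x => convexHull_mono (range_comp_subset_range f φ) (hDH x)
  exact hY.exists_extension_of_ambient_extension (Q := B0 × H) continuous_fst
    (hY.2.1.isClosedEmbedding_prodMk (isClosedEmbedding_codRestrict_kuratowskiMap _))
    (fun _ => rfl) (hπX.prodMk (hD.subtype_mk hDH')) (fun _ => rfl)
    fun a => Prod.ext (hfπ a).symm (Subtype.ext (hDA a))

theorem IsFiberANE.isFiberANR {Y : Type u} [TopologicalSpace Y] {πY : Y → B0}
    (hY : IsFiberANE B0 Y πY) : IsFiberANR B0 Y πY := by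
  refine ⟨hY.1, hY.2.1, fun X _ _ πX hπX i hi hiπ => ?_⟩
  let e := hi.isEmbedding.toHomeomorph
  obtain ⟨U, hU, g, hg, hgπ, hg_ext⟩ := hY.2.2 X _ inferInstance πX hπX (range i)
    hi.isClosed_range e.symm e.symm.continuous fun a => by
      rw [← hiπ]; exact congrArg (πX ∘ Subtype.val) (e.apply_symm_apply a)
  refine ⟨U, hU, fun u => i (g u), hi.continuous.comp hg, fun u => mem_range_self _,
    fun u => by rw [hiπ, hgπ], fun u hu => ?_⟩
  change i (g ⟨u, u.2⟩) = u
  rw [hg_ext u hu u.2]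
  exact congrArg Subtype.val (e.apply_symm_apply ⟨u, hu⟩)

theorem IsFiberANE.fiberProduct {Y₁ Y₂ : Type u} [TopologicalSpace Y₁] [TopologicalSpace Y₂]
    {π₁ : Y₁ → B0} {π₂ : Y₂ → B0} (h₁ : IsFiberANE B0 Y₁ π₁) (h₂ : IsFiberANE B0 Y₂ π₂) :
    IsFiberANE B0 {y : Y₁ × Y₂ // π₁ y.1 = π₂ y.2} (fun y => π₁ y.1.1) := by
  have := h₁.1
  have := h₂.1
  refine ⟨inferInstanceAs (MetrizableSpace {y : Y₁ × Y₂ | π₁ y.1 = π₂ y.2}),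
    h₁.2.1.comp (continuous_fst.comp continuous_subtype_val), fun X _ _ πX hπX A hA f hf hfπ => ?_⟩
  obtain ⟨U₁, hU₁, g₁, hg₁, hg₁π, hg₁_ext⟩ := h₁.2.2 X _ inferInstance πX hπX A hA
    (fun a => (f a).1.1) (continuous_fst.comp (continuous_subtype_val.comp hf)) hfπ
  obtain ⟨U₂, hU₂, g₂, hg₂, hg₂π, hg₂_ext⟩ := h₂.2.2 X _ inferInstance πX hπX A hA
    (fun a => (f a).1.2) (continuous_snd.comp (continuous_subtype_val.comp hf))
    fun a => (f a).2 ▸ hfπ a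
  have hg₁₂ : ∀ u : ↥(U₁ ∩ U₂), π₁ (g₁ ⟨u, u.2.1⟩) = π₂ (g₂ ⟨u, u.2.2⟩) := fun u => by
    rw [hg₁π, hg₂π]
  refine ⟨U₁ ∩ U₂, Filter.inter_mem hU₁ hU₂, fun u => ⟨(g₁ ⟨u, u.2.1⟩, g₂ ⟨u, u.2.2⟩), hg₁₂ u⟩,
    ?_, fun u => hg₁π _, fun a ha hu => Subtype.ext (Prod.ext ?_ ?_)⟩
  · exact ((hg₁.comp (continuous_subtype_val.subtype_mk _)).prodMk
      (hg₂.comp (continuous_subtype_val.subtype_mk _))).subtype_mk _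
  · exact hg₁_ext a ha hu.1
  · exact hg₂_ext a ha hu.2

end FiberANR

/-- The fiber product over `B0` of two `ANR_{B0}`-spaces is an `ANR_{B0}`-space. -/
theorem fiberANR_fiberProduct (B0 : Type u) [TopologicalSpace B0] [MetrizableSpace B0]
    (Y1 : Type u) [TopologicalSpace Y1] (π1 : Y1 → B0)
    (Y2 : Type u) [TopologicalSpace Y2] (π2 : Y2 → B0)
    (h1 : IsFiberANR B0 Y1 π1) (h2 : IsFiberANR B0 Y2 π2) :
    IsFiberANR B0 {y : Y1 × Y2 // π1 y.1 = π2 y.2} (fun y => π1 y.1.1) :=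
  (h1.isFiberANE.fiberProduct h2.isFiberANE).isFiberANR
end
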